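/- arXiv:2101.08773 — 4 statements merged into one kernel-verified Lean document; each statement's English description precedes it below -/
import Mathlib

section
/- For all integers n ≥ 1 and all real u with u ≥ √n, one has μ(n) = -∑_{m₁m₂n₁ = n, m₁ ≤ u, m₂ ≤ u} μ(m₁)μ(m₂) + (2μ(n) if n ≤ u, else 0), where the sum is over ordered triples (m₁, m₂, n₁) of positive integers with product n and m₁, m₂ ≤ u. -/
open ArithmeticFunction Finset

private lemma hb_mem_Icc_of_dvd {d n : ℕ} (hn : n ≠ 0) (h : d ∣ n) :
    d ∈ Finset.Icc 1 n := by
  rw [Finset.mem_Icc]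
  exact ⟨Nat.pos_of_dvd_of_pos h (Nat.pos_of_ne_zero hn), Nat.le_of_dvd (Nat.pos_of_ne_zero hn) h⟩

private lemma hb_innerMu (m : ℕ) (hm : m ≠ 0) :
    (∑ q ∈ m.divisorsAntidiagonal, (moebius q.1 : ℤ)) = if m = 1 then 1 else 0 := by
  have h : (moebius * zeta : ArithmeticFunction ℤ) m = (1 : ArithmeticFunction ℤ) m := by
    rw [moebius_mul_coe_zeta]
  rw [ArithmeticFunction.mul_apply, ArithmeticFunction.one_apply] at h
  rw [← h]
  refine Finset.sum_congr rfl fun q hq => ?_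
  rw [Nat.mem_divisorsAntidiagonal] at hq
  have h2 : q.2 ≠ 0 := by
    intro h0
    exact hq.2 (by rw [← hq.1, h0, mul_zero])
  simp [ArithmeticFunction.natCoe_apply, ArithmeticFunction.zeta_apply, h2]

private lemma hb_groupB (n : ℕ) (hn : n ≠ 0) (f : ℕ → ℕ → ℕ → ℤ) :
    (∑ t ∈ ((Finset.Icc 1 n ×ˢ Finset.Icc 1 n ×ˢ Finset.Icc 1 n).filter
        (fun t => t.1 * t.2.1 * t.2.2 = n)), f t.1 t.2.1 t.2.2)
    = ∑ p ∈ n.divisorsAntidiagonal, ∑ q ∈ p.2.divisorsAntidiagonal, f p.1 q.1 q.2 := by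
  rw [Finset.sum_sigma']
  refine Finset.sum_nbij' (fun t => ⟨(t.1, t.2.1 * t.2.2), (t.2.1, t.2.2)⟩)
    (fun x => (x.1.1, x.2.1, x.2.2)) ?_ ?_ ?_ ?_ ?_
  · intro t ht
    rw [Finset.mem_filter] at ht
    obtain ⟨-, hprod⟩ := ht
    rw [Finset.mem_sigma, Nat.mem_divisorsAntidiagonal, Nat.mem_divisorsAntidiagonal]
    refine ⟨⟨by rw [← mul_assoc]; exact hprod, hn⟩, rfl, ?_⟩
    intro h0
    simp only at h0
    exact hn (by rw [← hprod, mul_assoc, h0, mul_zero])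
  · intro x hx
    rw [Finset.mem_sigma, Nat.mem_divisorsAntidiagonal, Nat.mem_divisorsAntidiagonal] at hx
    obtain ⟨⟨h1, -⟩, h2, h3⟩ := hx
    rw [Finset.mem_filter, Finset.mem_product, Finset.mem_product]
    have hprod : x.1.1 * x.2.1 * x.2.2 = n := by rw [mul_assoc, h2, h1]
    refine ⟨⟨hb_mem_Icc_of_dvd hn ⟨x.1.2, h1.symm⟩, hb_mem_Icc_of_dvd hn ?_,
      hb_mem_Icc_of_dvd hn ?_⟩, hprod⟩
    · exact ⟨x.1.1 * x.2.2, by rw [← hprod]; ring⟩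
    · exact ⟨x.1.1 * x.2.1, by rw [← hprod]; ring⟩
  · intro t _; rfl
  · intro x hx
    rw [Finset.mem_sigma, Nat.mem_divisorsAntidiagonal, Nat.mem_divisorsAntidiagonal] at hx
    obtain ⟨-, h2, -⟩ := hx
    exact Sigma.ext (Prod.ext rfl h2) (by simp)
  · intro t _; rfl

private lemma hb_groupC (n : ℕ) (hn : n ≠ 0) (f : ℕ → ℕ → ℕ → ℤ) :
    (∑ t ∈ ((Finset.Icc 1 n ×ˢ Finset.Icc 1 n ×ˢ Finset.Icc 1 n).filter
        (fun t => t.1 * t.2.1 * t.2.2 = n)), f t.1 t.2.1 t.2.2)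
    = ∑ p ∈ n.divisorsAntidiagonal, ∑ q ∈ p.2.divisorsAntidiagonal, f q.1 p.1 q.2 := by
  rw [Finset.sum_sigma']
  refine Finset.sum_nbij' (fun t => ⟨(t.2.1, t.1 * t.2.2), (t.1, t.2.2)⟩)
    (fun x => (x.2.1, x.1.1, x.2.2)) ?_ ?_ ?_ ?_ ?_
  · intro t ht
    rw [Finset.mem_filter] at ht
    obtain ⟨-, hprod⟩ := ht
    rw [Finset.mem_sigma, Nat.mem_divisorsAntidiagonal, Nat.mem_divisorsAntidiagonal]
    refine ⟨⟨by rw [← hprod]; ring, hn⟩, rfl, ?_⟩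
    intro h0
    simp only at h0
    exact hn (by rw [← hprod, show t.1 * t.2.1 * t.2.2 = t.2.1 * (t.1 * t.2.2) by ring, h0,
      mul_zero])
  · intro x hx
    rw [Finset.mem_sigma, Nat.mem_divisorsAntidiagonal, Nat.mem_divisorsAntidiagonal] at hx
    obtain ⟨⟨h1, -⟩, h2, h3⟩ := hx
    rw [Finset.mem_filter, Finset.mem_product, Finset.mem_product]
    have hprod : x.2.1 * x.1.1 * x.2.2 = n := by
      rw [show x.2.1 * x.1.1 * x.2.2 = x.1.1 * (x.2.1 * x.2.2) by ring, h2, h1]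
    refine ⟨⟨hb_mem_Icc_of_dvd hn ?_, hb_mem_Icc_of_dvd hn ⟨x.1.2, h1.symm⟩,
      hb_mem_Icc_of_dvd hn ?_⟩, hprod⟩
    · exact ⟨x.1.1 * x.2.2, by rw [← hprod]; ring⟩
    · exact ⟨x.2.1 * x.1.1, by rw [← hprod]; ring⟩
  · intro t _; rfl
  · intro x hx
    rw [Finset.mem_sigma, Nat.mem_divisorsAntidiagonal, Nat.mem_divisorsAntidiagonal] at hx
    obtain ⟨-, h2, -⟩ := hx
    exact Sigma.ext (Prod.ext rfl h2) (by simp)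
  · intro t _; rfl

private lemma hb_sumDA (n : ℕ) (hn : n ≠ 0) (g : ℕ → ℤ) :
    (∑ p ∈ n.divisorsAntidiagonal, g p.1 * (if p.2 = 1 then 1 else 0)) = g n := by
  rw [Finset.sum_eq_single_of_mem (n, 1)
    (by rw [Nat.mem_divisorsAntidiagonal]; exact ⟨mul_one n, hn⟩)]
  · simp
  · intro p hp hne
    rw [Nat.mem_divisorsAntidiagonal] at hp
    by_cases h1 : p.2 = 1
    · exact absurd (Prod.ext (by rw [← hp.1, h1, mul_one]) h1) hne
    · simp [h1]

theorem stmt0 (n : ℕ) (hn : 1 ≤ n) (u : ℝ) (hu : Real.sqrt n ≤ u) :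
    (moebius n : ℤ) =
      -(∑ t ∈ ((Finset.Icc 1 n ×ˢ Finset.Icc 1 n ×ˢ Finset.Icc 1 n).filter
          (fun t => t.1 * t.2.1 * t.2.2 = n ∧ (t.1 : ℝ) ≤ u ∧ (t.2.1 : ℝ) ≤ u)),
          moebius t.1 * moebius t.2.1)
      + (if (n : ℝ) ≤ u then 2 * moebius n else 0) := by
  have hn0 : n ≠ 0 := Nat.one_le_iff_ne_zero.mp hn
  have hu0 : 0 ≤ u := le_trans (Real.sqrt_nonneg _) hu
  have hu2 : (n : ℝ) ≤ u * u := by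
    calc (n : ℝ) = Real.sqrt n * Real.sqrt n := (Real.mul_self_sqrt (by positivity)).symm
    _ ≤ u * u := mul_le_mul hu hu (Real.sqrt_nonneg _) hu0
  -- rewrite the filtered sum
  have hfilter : ((Finset.Icc 1 n ×ˢ Finset.Icc 1 n ×ˢ Finset.Icc 1 n).filter
      (fun t => t.1 * t.2.1 * t.2.2 = n ∧ (t.1 : ℝ) ≤ u ∧ (t.2.1 : ℝ) ≤ u))
      = ((Finset.Icc 1 n ×ˢ Finset.Icc 1 n ×ˢ Finset.Icc 1 n).filter
        (fun t => t.1 * t.2.1 * t.2.2 = n)).filter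
        (fun t => (t.1 : ℝ) ≤ u ∧ (t.2.1 : ℝ) ≤ u) := by
    rw [Finset.filter_filter]
  set S := ((Finset.Icc 1 n ×ˢ Finset.Icc 1 n ×ˢ Finset.Icc 1 n).filter
      (fun t => t.1 * t.2.1 * t.2.2 = n)) with hS
  rw [hfilter, Finset.sum_filter]
  -- pointwise decomposition on S
  have hpt : ∀ t ∈ S, (if (t.1 : ℝ) ≤ u ∧ (t.2.1 : ℝ) ≤ u
        then (moebius t.1 * moebius t.2.1 : ℤ) else 0)
      = moebius t.1 * moebius t.2.1
        - (if ¬ (t.1 : ℝ) ≤ u then (moebius t.1 * moebius t.2.1 : ℤ) else 0)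
        - (if ¬ (t.2.1 : ℝ) ≤ u then (moebius t.1 * moebius t.2.1 : ℤ) else 0) := by
    intro t ht
    rw [hS, Finset.mem_filter] at ht
    obtain ⟨-, hprod⟩ := ht
    have hle : (t.1 : ℝ) * (t.2.1 : ℝ) ≤ n := by
      have h1 : t.1 * t.2.1 ≤ n := by
        rw [← hprod]
        exact Nat.le_mul_of_pos_right _ (by
          rcases Nat.eq_zero_or_pos t.2.2 with h | h
          · exfalso; exact hn0 (by rw [← hprod, h, mul_zero])
          · exact h)
      exact_mod_cast h1
    by_cases h1 : (t.1 : ℝ) ≤ u <;> by_cases h2 : (t.2.1 : ℝ) ≤ u <;> simp [h1, h2]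
    exfalso
    push_neg at h1 h2
    nlinarith [hle, hu2]
  rw [Finset.sum_congr rfl hpt, Finset.sum_sub_distrib, Finset.sum_sub_distrib]
  -- main sum
  have hmain : (∑ t ∈ S, (moebius t.1 * moebius t.2.1 : ℤ)) = moebius n := by
    rw [hS, hb_groupB n hn0 (fun x y _ => (moebius x * moebius y : ℤ))]
    rw [show (∑ p ∈ n.divisorsAntidiagonal, ∑ q ∈ p.2.divisorsAntidiagonal,
        (moebius p.1 * moebius q.1 : ℤ))
      = ∑ p ∈ n.divisorsAntidiagonal, (moebius p.1 : ℤ) * (if p.2 = 1 then 1 else 0) from ?_]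
    · exact hb_sumDA n hn0 (fun d => (moebius d : ℤ))
    refine Finset.sum_congr rfl fun p hp => ?_
    rw [Nat.mem_divisorsAntidiagonal] at hp
    have hp2 : p.2 ≠ 0 := fun h0 => hp.2 (by rw [← hp.1, h0, mul_zero])
    rw [← Finset.mul_sum, hb_innerMu p.2 hp2]
  -- first error sum
  have herr1 : (∑ t ∈ S,
      (if ¬ (t.1 : ℝ) ≤ u then (moebius t.1 * moebius t.2.1 : ℤ) else 0))
      = if ¬ (n : ℝ) ≤ u then (moebius n : ℤ) else 0 := by
    rw [hS, hb_groupB n hn0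
      (fun x y _ => if ¬ (x : ℝ) ≤ u then (moebius x * moebius y : ℤ) else 0)]
    rw [show (∑ p ∈ n.divisorsAntidiagonal, ∑ q ∈ p.2.divisorsAntidiagonal,
        (if ¬ (p.1 : ℝ) ≤ u then (moebius p.1 * moebius q.1 : ℤ) else 0))
      = ∑ p ∈ n.divisorsAntidiagonal,
        (if ¬ (p.1 : ℝ) ≤ u then (moebius p.1 : ℤ) else 0) * (if p.2 = 1 then 1 else 0) from ?_]
    · exact hb_sumDA n hn0 (fun d => if ¬ (d : ℝ) ≤ u then (moebius d : ℤ) else 0)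
    refine Finset.sum_congr rfl fun p hp => ?_
    rw [Nat.mem_divisorsAntidiagonal] at hp
    have hp2 : p.2 ≠ 0 := fun h0 => hp.2 (by rw [← hp.1, h0, mul_zero])
    rw [← hb_innerMu p.2 hp2, Finset.mul_sum]
    refine Finset.sum_congr rfl fun q _ => ?_
    by_cases h : (p.1 : ℝ) ≤ u <;> simp [h]
  -- second error sum
  have herr2 : (∑ t ∈ S,
      (if ¬ (t.2.1 : ℝ) ≤ u then (moebius t.1 * moebius t.2.1 : ℤ) else 0))
      = if ¬ (n : ℝ) ≤ u then (moebius n : ℤ) else 0 := by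
    rw [hS, hb_groupC n hn0
      (fun x y _ => if ¬ (y : ℝ) ≤ u then (moebius x * moebius y : ℤ) else 0)]
    rw [show (∑ p ∈ n.divisorsAntidiagonal, ∑ q ∈ p.2.divisorsAntidiagonal,
        (if ¬ (p.1 : ℝ) ≤ u then (moebius q.1 * moebius p.1 : ℤ) else 0))
      = ∑ p ∈ n.divisorsAntidiagonal,
        (if ¬ (p.1 : ℝ) ≤ u then (moebius p.1 : ℤ) else 0) * (if p.2 = 1 then 1 else 0) from ?_]
    · exact hb_sumDA n hn0 (fun d => if ¬ (d : ℝ) ≤ u then (moebius d : ℤ) else 0)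
    refine Finset.sum_congr rfl fun p hp => ?_
    rw [Nat.mem_divisorsAntidiagonal] at hp
    have hp2 : p.2 ≠ 0 := fun h0 => hp.2 (by rw [← hp.1, h0, mul_zero])
    rw [← hb_innerMu p.2 hp2, Finset.mul_sum]
    refine Finset.sum_congr rfl fun q _ => ?_
    by_cases h : (p.1 : ℝ) ≤ u <;> simp [h, mul_comm]
  rw [hmain, herr1, herr2]
  by_cases h : (n : ℝ) ≤ u <;> simp [h] <;> ring
end

section
/- For all real x ≥ 1 and all u with 1 ≤ u ≤ x, M(x) = M(u) - ∑_{m ≤ u} μ(m) ∑_{u/m < n ≤ x/m} M(x/(mn)). -/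
open ArithmeticFunction Finset
open scoped Classical

/-- The Mertens function `M(y) = ∑_{1 ≤ k ≤ y} μ(k)`. -/
noncomputable def Mertens (y : ℝ) : ℤ := ∑ k ∈ Finset.Icc 1 ⌊y⌋₊, moebius k

/-- Hyperbola-style reindexing: pairs `(n,k)` with `n*k ≤ N` vs divisor pairs. -/
lemma key_reindex (N : ℕ) (f : ℕ → ℕ → ℤ) :
    ∑ n ∈ Finset.Icc 1 N, ∑ k ∈ Finset.Icc 1 (N / n), f n k
      = ∑ j ∈ Finset.Icc 1 N, ∑ p ∈ j.divisorsAntidiagonal, f p.1 p.2 := by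
  rw [Finset.sum_sigma', Finset.sum_sigma']
  refine Finset.sum_nbij' (fun p => ⟨p.1 * p.2, (p.1, p.2)⟩)
    (fun p => ⟨p.2.1, p.2.2⟩) ?_ ?_ ?_ ?_ ?_
  · rintro ⟨n, k⟩ h
    simp only [Finset.mem_sigma, Finset.mem_Icc] at h
    obtain ⟨⟨hn1, hnN⟩, hk1, hkN⟩ := h
    have hn0 : 0 < n := hn1
    have hmul : k * n ≤ N := (Nat.le_div_iff_mul_le hn0).1 hkN
    have hnk : 1 ≤ n * k := Nat.one_le_iff_ne_zero.2 (by positivity)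
    have hle : n * k ≤ N := by rw [Nat.mul_comm]; exact hmul
    simp only [Finset.mem_sigma, Finset.mem_Icc, Nat.mem_divisorsAntidiagonal]
    exact ⟨⟨hnk, hle⟩, by simp; omega⟩
  · rintro ⟨j, a, b⟩ h
    simp only [Finset.mem_sigma, Finset.mem_Icc, Nat.mem_divisorsAntidiagonal] at h
    obtain ⟨⟨hj1, hjN⟩, hab, hj0⟩ := h
    have ha0 : 0 < a := Nat.pos_of_ne_zero (by rintro rfl; simp at hab; omega)
    have hb0 : 0 < b := Nat.pos_of_ne_zero (by rintro rfl; simp at hab; omega)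
    simp only [Finset.mem_sigma, Finset.mem_Icc]
    refine ⟨⟨ha0, le_trans (Nat.le_of_dvd (by omega) ⟨b, hab.symm⟩) hjN⟩, hb0, ?_⟩
    exact (Nat.le_div_iff_mul_le ha0).2 (by rw [Nat.mul_comm, hab]; exact hjN)
  · rintro ⟨n, k⟩ _; rfl
  · rintro ⟨j, a, b⟩ h
    simp only [Finset.mem_sigma, Finset.mem_Icc, Nat.mem_divisorsAntidiagonal] at h
    simp [h.2.1]
  · rintro ⟨n, k⟩ _; rfl

lemma moebius_divisor_sum (j : ℕ) (hj : j ≠ 0) :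
    ∑ d ∈ j.divisors, (moebius d : ℤ) = if j = 1 then 1 else 0 := by
  rw [← ArithmeticFunction.coe_zeta_mul_apply, ArithmeticFunction.coe_zeta_mul_moebius,
    ArithmeticFunction.one_apply]

/-- `∑_{n ≤ y} M(y/n) = 1` for `y ≥ 1`. -/
lemma mertens_sum_one (y : ℝ) (hy : 1 ≤ y) :
    ∑ n ∈ Finset.Icc 1 ⌊y⌋₊, Mertens (y / n) = 1 := by
  have hN : 1 ≤ ⌊y⌋₊ := Nat.one_le_floor_iff y |>.2 hy
  have h1 : ∀ n ∈ Finset.Icc 1 ⌊y⌋₊, Mertens (y / n) = ∑ k ∈ Finset.Icc 1 (⌊y⌋₊ / n), (moebius k : ℤ) := by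
    intro n _
    unfold Mertens
    rw [Nat.floor_div_natCast]
  rw [Finset.sum_congr rfl h1, key_reindex ⌊y⌋₊ (fun _ k => (moebius k : ℤ))]
  have h2 : ∀ j ∈ Finset.Icc 1 ⌊y⌋₊,
      (∑ p ∈ j.divisorsAntidiagonal, (moebius p.2 : ℤ)) = if j = 1 then 1 else 0 := by
    intro j hj
    simp only [Finset.mem_Icc] at hj
    rw [Nat.sum_divisorsAntidiagonal' (f := fun _ b => (moebius b : ℤ))]
    exact moebius_divisor_sum j (by omega)
  rw [Finset.sum_congr rfl h2]
  simp [Finset.sum_ite_eq', Finset.mem_Icc, hN]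

theorem stmt2 (x u : ℝ) (hx : 1 ≤ x) (hu1 : 1 ≤ u) (hux : u ≤ x) :
    Mertens x = Mertens u -
      ∑ m ∈ Finset.Icc 1 ⌊u⌋₊, moebius m *
        ∑ n ∈ (Finset.Icc 1 ⌊x / (m : ℝ)⌋₊).filter (fun n : ℕ => u / (m : ℝ) < (n : ℝ)),
          Mertens (x / ((m : ℝ) * (n : ℝ))) := by
  have hNu : 1 ≤ ⌊u⌋₊ := Nat.one_le_floor_iff u |>.2 hu1
  -- Lemma B: full sum up to u/m equals Mertens x
  have hB : (∑ m ∈ Finset.Icc 1 ⌊u⌋₊, (moebius m : ℤ) *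
      ∑ n ∈ Finset.Icc 1 (⌊u⌋₊ / m), Mertens (x / ((m : ℝ) * (n : ℝ)))) = Mertens x := by
    have := key_reindex ⌊u⌋₊ (fun m n => (moebius m : ℤ) * Mertens (x / ((m : ℝ) * (n : ℝ))))
    rw [← Finset.sum_congr rfl (fun m _ => Finset.mul_sum _ _ _)] at *
    rw [this]
    have h2 : ∀ j ∈ Finset.Icc 1 ⌊u⌋₊,
        (∑ p ∈ j.divisorsAntidiagonal, (moebius p.1 : ℤ) * Mertens (x / ((p.1 : ℝ) * (p.2 : ℝ))))
          = (if j = 1 then 1 else 0) * Mertens (x / j) := by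
      intro j hj
      simp only [Finset.mem_Icc] at hj
      have hj0 : j ≠ 0 := by omega
      have : ∀ p ∈ j.divisorsAntidiagonal,
          (moebius p.1 : ℤ) * Mertens (x / ((p.1 : ℝ) * (p.2 : ℝ)))
            = (moebius p.1 : ℤ) * Mertens (x / j) := by
        intro p hp
        rw [Nat.mem_divisorsAntidiagonal] at hp
        rw [← Nat.cast_mul, hp.1]
      rw [Finset.sum_congr rfl this, ← Finset.sum_mul]
      rw [Nat.sum_divisorsAntidiagonal (f := fun a _ => (moebius a : ℤ))]
      rw [moebius_divisor_sum j hj0]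
    rw [Finset.sum_congr rfl h2]
    have h3 : ∀ j ∈ Finset.Icc 1 ⌊u⌋₊, (if j = 1 then (1:ℤ) else 0) * Mertens (x / (j:ℝ))
        = if j = 1 then Mertens (x / (j:ℝ)) else 0 := fun j _ => by split <;> simp
    rw [Finset.sum_congr rfl h3,
      Finset.sum_ite_eq' (Finset.Icc 1 ⌊u⌋₊) 1 (fun j : ℕ => Mertens (x / (j:ℝ)))]
    simp [hNu]
  -- Lemma A applied: full sum up to x/m equals Mertens u
  have hA : (∑ m ∈ Finset.Icc 1 ⌊u⌋₊, (moebius m : ℤ) *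
      ∑ n ∈ Finset.Icc 1 ⌊x / (m : ℝ)⌋₊, Mertens (x / ((m : ℝ) * (n : ℝ)))) = Mertens u := by
    have h1 : ∀ m ∈ Finset.Icc 1 ⌊u⌋₊,
        (∑ n ∈ Finset.Icc 1 ⌊x / (m : ℝ)⌋₊, Mertens (x / ((m : ℝ) * (n : ℝ)))) = 1 := by
      intro m hm
      simp only [Finset.mem_Icc] at hm
      have hm0 : (0 : ℝ) < m := by exact_mod_cast hm.1
      have hmu : (m : ℝ) ≤ u := by
        calc (m : ℝ) ≤ (⌊u⌋₊ : ℝ) := by exact_mod_cast hm.2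
          _ ≤ u := Nat.floor_le (by linarith)
      have hxm : 1 ≤ x / (m : ℝ) := (one_le_div hm0).2 (le_trans hmu hux)
      have := mertens_sum_one (x / m) hxm
      rw [← this]
      refine Finset.sum_congr rfl fun n _ => ?_
      rw [div_div]
    rw [Finset.sum_congr rfl (fun m hm => by rw [h1 m hm, mul_one])]
    simp [Mertens]
  -- split the inner sum
  have hsplit : ∀ m ∈ Finset.Icc 1 ⌊u⌋₊,
      (∑ n ∈ Finset.Icc 1 ⌊x / (m : ℝ)⌋₊, Mertens (x / ((m : ℝ) * (n : ℝ))))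
        = (∑ n ∈ Finset.Icc 1 (⌊u⌋₊ / m), Mertens (x / ((m : ℝ) * (n : ℝ))))
          + ∑ n ∈ (Finset.Icc 1 ⌊x / (m : ℝ)⌋₊).filter (fun n : ℕ => u / (m : ℝ) < (n : ℝ)),
              Mertens (x / ((m : ℝ) * (n : ℝ))) := by
    intro m hm
    simp only [Finset.mem_Icc] at hm
    have hm0 : (0 : ℝ) < m := by exact_mod_cast hm.1
    have hmu : (m : ℝ) ≤ u := by
      calc (m : ℝ) ≤ (⌊u⌋₊ : ℝ) := by exact_mod_cast hm.2
        _ ≤ u := Nat.floor_le (by linarith)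
    have hfloor : ⌊u⌋₊ / m = ⌊u / (m : ℝ)⌋₊ := (Nat.floor_div_natCast u m).symm
    have hsub : Finset.Icc 1 (⌊u⌋₊ / m) =
        (Finset.Icc 1 ⌊x / (m : ℝ)⌋₊).filter (fun n : ℕ => ¬ u / (m : ℝ) < (n : ℝ)) := by
      ext n
      simp only [Finset.mem_filter, Finset.mem_Icc, not_lt, hfloor]
      constructor
      · intro ⟨h1, h2⟩
        have hn : (n : ℝ) ≤ u / m := (Nat.le_floor_iff (by positivity)).1 h2
        refine ⟨⟨h1, Nat.le_floor ?_⟩, hn⟩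
        exact le_trans hn (by gcongr)
      · intro ⟨⟨h1, _⟩, h3⟩
        exact ⟨h1, Nat.le_floor h3⟩
    rw [hsub, add_comm]
    exact (Finset.sum_filter_add_sum_filter_not _ _ _).symm
  have hfin : (∑ m ∈ Finset.Icc 1 ⌊u⌋₊, (moebius m : ℤ) *
      ∑ n ∈ Finset.Icc 1 ⌊x / (m : ℝ)⌋₊, Mertens (x / ((m : ℝ) * (n : ℝ))))
      = (∑ m ∈ Finset.Icc 1 ⌊u⌋₊, (moebius m : ℤ) *
          ∑ n ∈ Finset.Icc 1 (⌊u⌋₊ / m), Mertens (x / ((m : ℝ) * (n : ℝ))))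
        + ∑ m ∈ Finset.Icc 1 ⌊u⌋₊, (moebius m : ℤ) *
            ∑ n ∈ (Finset.Icc 1 ⌊x / (m : ℝ)⌋₊).filter (fun n : ℕ => u / (m : ℝ) < (n : ℝ)),
              Mertens (x / ((m : ℝ) * (n : ℝ))) := by
    rw [← Finset.sum_add_distrib]
    exact Finset.sum_congr rfl fun m hm => by rw [hsplit m hm, mul_add]
  rw [hfin, hB] at hA
  linarith
end

section
/- Let x > 0 be real and let a, u be real numbers with √x ≤ u. Define D(r, y) = ∑_{b | r, b ≤ y} μ(b). Then for any positive integer a with a ≤ u, ∑_{r ≤ x/a} ∑_{b | r, b < a} μ(b) = ∑_{r ≤ x/a} D(r, x/r) - ∑_{b ≥ a} μ(b) ⌊x/b²⌋. -/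
open ArithmeticFunction Finset
open scoped Classical

/-- `D r y = ∑_{b ∣ r, b ≤ y} μ(b)`. -/
noncomputable def Ddiv (r : ℕ) (y : ℝ) : ℤ :=
  ∑ b ∈ r.divisors.filter (fun b : ℕ => (b : ℝ) ≤ y), moebius b

theorem stmt5 (x u : ℝ) (hx : 0 < x) (hu : Real.sqrt x ≤ u)
    (a : ℕ) (ha : 0 < a) (hau : (a : ℝ) ≤ u) :
    (∑ r ∈ Finset.Icc 1 ⌊x / (a : ℝ)⌋₊,
        ∑ b ∈ r.divisors.filter (fun b : ℕ => b < a), moebius b)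
    = (∑ r ∈ Finset.Icc 1 ⌊x / (a : ℝ)⌋₊, Ddiv r (x / (r : ℝ)))
    - ∑ b ∈ Finset.Icc a ⌊Real.sqrt x⌋₊,
        moebius b * (⌊x / ((b : ℝ) ^ 2)⌋₊ : ℤ) := by
  set N := ⌊x / (a : ℝ)⌋₊ with hN
  set B := ⌊Real.sqrt x⌋₊ with hB
  have ha0 : (0:ℝ) < a := by exact_mod_cast ha
  -- Step 1: split Ddiv pointwise
  have step1 : ∀ r ∈ Finset.Icc 1 N,
      Ddiv r (x / r) = (∑ b ∈ r.divisors.filter (fun b : ℕ => b < a), moebius b)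
        + ∑ b ∈ Finset.Icc a B,
            (if b ∣ r ∧ (b:ℝ) ≤ x / r then (moebius b : ℤ) else 0) := by
    intro r hr
    obtain ⟨hr1, hrN⟩ := Finset.mem_Icc.mp hr
    have hr0 : (0:ℝ) < r := by exact_mod_cast hr1
    have hrne : r ≠ 0 := by omega
    have hrx : (r:ℝ) ≤ x / a := le_trans (Nat.cast_le.mpr hrN) (Nat.floor_le (by positivity))
    have hax : (a:ℝ) ≤ x / r := by
      rw [le_div_iff₀ hr0]
      rw [le_div_iff₀ ha0] at hrx
      nlinarith
    have hsplit : r.divisors.filter (fun b : ℕ => (b : ℝ) ≤ x / r)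
        = r.divisors.filter (fun b : ℕ => b < a)
          ∪ r.divisors.filter (fun b : ℕ => a ≤ b ∧ (b:ℝ) ≤ x / r) := by
      ext b
      simp only [Finset.mem_union, Finset.mem_filter]
      constructor
      · rintro ⟨hbd, hble⟩
        rcases lt_or_ge b a with h | h
        · exact Or.inl ⟨hbd, h⟩
        · exact Or.inr ⟨hbd, h, hble⟩
      · rintro (⟨hbd, hba⟩ | ⟨hbd, _, hble⟩)
        · refine ⟨hbd, ?_⟩
          have : (b:ℝ) < a := by exact_mod_cast hba
          linarith
        · exact ⟨hbd, hble⟩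
    have hdisj : Disjoint (r.divisors.filter (fun b : ℕ => b < a))
        (r.divisors.filter (fun b : ℕ => a ≤ b ∧ (b:ℝ) ≤ x / r)) := by
      rw [Finset.disjoint_filter]
      rintro b _ hba ⟨hab, _⟩
      omega
    have hfilter2 : r.divisors.filter (fun b : ℕ => a ≤ b ∧ (b:ℝ) ≤ x / r)
        = (Finset.Icc a B).filter (fun b : ℕ => b ∣ r ∧ (b:ℝ) ≤ x / r) := by
      ext b
      simp only [Finset.mem_filter, Nat.mem_divisors, Finset.mem_Icc]
      constructor
      · rintro ⟨⟨hbd, _⟩, hab, hble⟩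
        have hb0 : 0 < b := lt_of_lt_of_le ha hab
        have hb0' : (0:ℝ) < b := by exact_mod_cast hb0
        have hbr : (b:ℝ) ≤ r := by exact_mod_cast Nat.le_of_dvd (by omega) hbd
        have hbsq : (b:ℝ)^2 ≤ x := by
          have h1 : (b:ℝ) * b ≤ r * (x / r) :=
            mul_le_mul hbr hble (by positivity) (by positivity)
          rw [mul_div_cancel₀ _ (ne_of_gt hr0)] at h1
          nlinarith
        have : (b:ℝ) ≤ Real.sqrt x := (Real.le_sqrt' hb0').mpr hbsq
        exact ⟨⟨hab, Nat.le_floor this⟩, hbd, hble⟩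
      · rintro ⟨⟨hab, _⟩, hbd, hble⟩
        exact ⟨⟨hbd, hrne⟩, hab, hble⟩
    rw [Ddiv, hsplit, Finset.sum_union hdisj, hfilter2]
    congr 1
    exact Finset.sum_filter _ _
  rw [Finset.sum_congr rfl step1, Finset.sum_add_distrib, Finset.sum_comm]
  -- Step 2: inner sum over r equals μ b * ⌊x/b²⌋
  have step2 : ∀ b ∈ Finset.Icc a B,
      (∑ r ∈ Finset.Icc 1 N, if b ∣ r ∧ (b:ℝ) ≤ x / r then (moebius b : ℤ) else 0)
        = moebius b * (⌊x / ((b : ℝ) ^ 2)⌋₊ : ℤ) := by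
    intro b hb
    obtain ⟨hab, hbB⟩ := Finset.mem_Icc.mp hb
    have hb0 : 0 < b := lt_of_lt_of_le ha hab
    have hb0' : (0:ℝ) < b := by exact_mod_cast hb0
    have hcard : (Finset.Icc 1 N).filter (fun r => b ∣ r ∧ (b:ℝ) ≤ x / r)
        = (Finset.Ioc 0 ⌊x / (b:ℝ)⌋₊).filter (fun r => b ∣ r) := by
      ext r
      simp only [Finset.mem_filter, Finset.mem_Icc, Finset.mem_Ioc]
      constructor
      · rintro ⟨⟨hr1, hrN⟩, hbd, hble⟩
        have hr0 : (0:ℝ) < r := by exact_mod_cast hr1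
        have : (r:ℝ) ≤ x / b := by
          rw [le_div_iff₀ hb0']
          rw [le_div_iff₀ hr0] at hble
          nlinarith
        exact ⟨⟨by omega, Nat.le_floor this⟩, hbd⟩
      · rintro ⟨⟨hr0, hrM⟩, hbd⟩
        have hr0' : (0:ℝ) < r := by exact_mod_cast hr0
        have hrxb : (r:ℝ) ≤ x / b := le_trans (Nat.cast_le.mpr hrM) (Nat.floor_le (by positivity))
        have hrxa : (r:ℝ) ≤ x / a := by
          refine le_trans hrxb (div_le_div_of_nonneg_left (le_of_lt hx) ha0 ?_)
          exact_mod_cast hab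
        refine ⟨⟨by omega, Nat.le_floor hrxa⟩, hbd, ?_⟩
        rw [le_div_iff₀ hr0']
        rw [le_div_iff₀ hb0'] at hrxb
        nlinarith
    have hdivcard : ⌊x / ((b:ℝ)^2)⌋₊ = ⌊x / (b:ℝ)⌋₊ / b := by
      rw [← Nat.floor_div_natCast (x / (b:ℝ)) b, div_div, ← sq]
    rw [← Finset.sum_filter, Finset.sum_const, hcard, Nat.Ioc_filter_dvd_card_eq_div,
      nsmul_eq_mul, hdivcard, mul_comm]
  rw [Finset.sum_congr rfl step2]
  ring
end

section
/- For all z ≥ 2 and all reals a ≥ 1 and K ≥ 1, ∑_{a/K < d ≤ 2a, p | d ⇒ p > z} 1/d = O(log(2K)/log z + 1), where the sum is over positive integers d in (a/K, 2a] all of whose prime factors exceed z. -/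
open Finset
open scoped Classical

lemma sum_Ioc_recip (m N : ℕ) (h : m ≤ N) :
    ∑ n ∈ Finset.Ioc m N, (1 : ℝ) / n = (harmonic N : ℝ) - (harmonic m : ℝ) := by
  have key : ∀ k : ℕ, ∑ n ∈ Finset.Ioc 0 k, (1 : ℝ) / n = (harmonic k : ℝ) := by
    intro k
    have : Finset.Ioc 0 k = Finset.Icc 1 k := by ext x; simp; omega
    rw [this, harmonic_eq_sum_Icc]
    push_cast
    simp [one_div]
  have := Finset.sum_Ioc_consecutive (fun n : ℕ => (1 : ℝ) / n) (Nat.zero_le m) h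
  rw [key m, key N] at this
  linarith

theorem stmt15 :
    ∃ C : ℝ, 0 < C ∧ ∀ z a K : ℝ, 2 ≤ z → 1 ≤ a → 1 ≤ K →
      (∑ d ∈ (Finset.Ioc ⌊a / K⌋₊ ⌊2 * a⌋₊).filter
          (fun d : ℕ => ∀ p ∈ d.primeFactors, z < (p : ℝ)), (1 : ℝ) / d)
        ≤ C * (Real.log (2 * K) / Real.log z + 1) := by
  refine ⟨3, by norm_num, fun z a K hz ha hK => ?_⟩
  have hK0 : (0:ℝ) < K := by linarith
  have hz0 : (0:ℝ) < z := by linarith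
  have hlogz : 0 < Real.log z := Real.log_pos (by linarith)
  set m := ⌊a / K⌋₊ with hm
  set M := ⌊2 * a⌋₊ with hM
  set n₀ := ⌊z⌋₊ with hn₀def
  set I := (Finset.Ioc m M).filter (fun d : ℕ => ∀ p ∈ d.primeFactors, z < (p : ℝ)) with hI
  set S := ∑ d ∈ I, (1 : ℝ) / d with hS
  have hn₀z : (n₀ : ℝ) ≤ z := Nat.floor_le hz0.le
  have hn₀2 : 2 ≤ n₀ := Nat.le_floor (by exact_mod_cast hz)
  have hmM : m ≤ M := by
    apply Nat.floor_le_floor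
    nlinarith [div_le_self (by linarith : (0:ℝ) ≤ a) hK]
  have hMpos : 0 < M := by
    rw [hM]
    have : (1:ℝ) ≤ 2 * a := by linarith
    exact Nat.floor_pos.mpr this
  -- injectivity of the pairing map
  have hinj : Set.InjOn (fun p : ℕ × ℕ => p.1 * p.2) ↑(I ×ˢ Finset.Ioc 0 n₀) := by
    rintro ⟨r₁, s₁⟩ h₁ ⟨r₂, s₂⟩ h₂ heq
    simp only [Finset.mem_coe, Finset.mem_product, hI, Finset.mem_filter,
      Finset.mem_Ioc] at h₁ h₂
    obtain ⟨⟨⟨hr₁m, hr₁M⟩, hr₁p⟩, hs₁0, hs₁⟩ := h₁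
    obtain ⟨⟨⟨hr₂m, hr₂M⟩, hr₂p⟩, hs₂0, hs₂⟩ := h₂
    simp only at heq
    have cop : ∀ r s : ℕ, (∀ p ∈ r.primeFactors, z < (p : ℝ)) → 0 < r → 0 < s → s ≤ n₀ →
        Nat.Coprime r s := by
      intro r s hrp hr0 hs0 hsn
      by_contra hnc
      obtain ⟨p, hp, hpr, hps⟩ := Nat.Prime.not_coprime_iff_dvd.mp hnc
      have hpz : z < (p : ℝ) := hrp p (Nat.mem_primeFactors.mpr ⟨hp, hpr, hr0.ne'⟩)
      have hps' : p ≤ s := Nat.le_of_dvd hs0 hps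
      have : (p : ℝ) ≤ n₀ := by exact_mod_cast hps'.trans hsn
      linarith
    have hr₁0 : 0 < r₁ := by omega
    have hr₂0 : 0 < r₂ := by omega
    have hd12 : r₁ ∣ r₂ := by
      have h1 : r₁ ∣ r₂ * s₂ := heq ▸ Dvd.intro s₁ rfl
      exact (Nat.Coprime.dvd_of_dvd_mul_right (cop r₁ s₂ hr₁p hr₁0 hs₂0 hs₂) h1)
    have hd21 : r₂ ∣ r₁ := by
      have h1 : r₂ ∣ r₁ * s₁ := heq ▸ Dvd.intro s₂ rfl
      exact (Nat.Coprime.dvd_of_dvd_mul_right (cop r₂ s₁ hr₂p hr₂0 hs₁0 hs₁) h1)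
    have hrr : r₁ = r₂ := Nat.dvd_antisymm hd12 hd21
    have hss : s₁ = s₂ := by
      subst hrr
      exact Nat.eq_of_mul_eq_mul_left hr₁0 heq
    simp [hrr, hss]
  -- S * H ≤ sum over Ioc m (M * n₀)
  have hprod : S * (harmonic n₀ : ℝ) ≤ ∑ n ∈ Finset.Ioc m (M * n₀), (1 : ℝ) / n := by
    have hIoc0 : Finset.Ioc 0 n₀ = Finset.Icc 1 n₀ := by ext x; simp; omega
    have hH : (harmonic n₀ : ℝ) = ∑ s ∈ Finset.Ioc 0 n₀, (1 : ℝ) / s := by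
      rw [hIoc0, harmonic_eq_sum_Icc]; push_cast; simp [one_div]
    rw [hS, hH, Finset.sum_mul_sum]
    have hsum : ∑ r ∈ I, ∑ s ∈ Finset.Ioc 0 n₀, (1:ℝ) / r * (1 / s)
        = ∑ n ∈ (I ×ˢ Finset.Ioc 0 n₀).image (fun p : ℕ × ℕ => p.1 * p.2), (1:ℝ) / n := by
      rw [Finset.sum_image (fun x hx y hy h => hinj (by exact_mod_cast hx) (by exact_mod_cast hy) h)]
      rw [Finset.sum_product]
      apply Finset.sum_congr rfl
      intro r _
      apply Finset.sum_congr rfl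
      intro s _
      push_cast
      rw [one_div_mul_one_div]
    rw [hsum]
    apply Finset.sum_le_sum_of_subset_of_nonneg
    · intro n hn
      simp only [Finset.mem_image] at hn
      obtain ⟨⟨r, s⟩, hp, hrs⟩ := hn
      simp only [Finset.mem_product, hI, Finset.mem_filter, Finset.mem_Ioc] at hp
      obtain ⟨⟨⟨hrm, hrM⟩, _⟩, hs0, hsn⟩ := hp
      simp only [Finset.mem_Ioc]
      constructor
      · calc m < r := hrm
          _ = r * 1 := (mul_one r).symm
          _ ≤ r * s := Nat.mul_le_mul_left r hs0
          _ = n := hrs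
      · calc n = r * s := hrs.symm
          _ ≤ M * n₀ := Nat.mul_le_mul hrM hsn
    · intro n _ _
      positivity
  have hMn₀pos : m ≤ M * n₀ := hmM.trans (Nat.le_mul_of_pos_right M (by omega))
  rw [sum_Ioc_recip m (M * n₀) hMn₀pos] at hprod
  have hub : (harmonic (M * n₀) : ℝ) ≤ 1 + Real.log ((M:ℝ) * n₀) := by
    have := harmonic_le_one_add_log (M * n₀)
    rwa [Nat.cast_mul] at this
  have hlb : Real.log ((m:ℝ) + 1) ≤ (harmonic m : ℝ) := by
    have := log_add_one_le_harmonic m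
    push_cast at this
    exact this
  have hM2a : (M : ℝ) ≤ 2 * a := Nat.floor_le (by linarith)
  have haK : a < K * ((m:ℝ) + 1) := by
    have h := Nat.lt_floor_add_one (a / K)
    calc a = (a / K) * K := by field_simp
      _ < ((m : ℝ) + 1) * K := by
          apply mul_lt_mul_of_pos_right _ hK0
          exact_mod_cast h
      _ = K * ((m:ℝ) + 1) := by ring
  have hlogM : Real.log ((M : ℝ) * n₀) ≤ Real.log (2 * K) + Real.log z + Real.log ((m:ℝ) + 1) := by
    have hMpos' : (0:ℝ) < (M:ℝ) * n₀ := by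
      have h1 : (0:ℝ) < M := by exact_mod_cast hMpos
      have h2 : (0:ℝ) < n₀ := by exact_mod_cast (by omega : 0 < n₀)
      positivity
    have h1 : (M : ℝ) * n₀ ≤ (2 * K) * z * ((m : ℝ) + 1) := by
      have hn₀0 : (0:ℝ) ≤ n₀ := by positivity
      have hm0 : (0:ℝ) ≤ (m:ℝ) := by positivity
      nlinarith
    calc Real.log ((M : ℝ) * n₀) ≤ Real.log ((2 * K) * z * ((m : ℝ) + 1)) :=
          Real.log_le_log hMpos' h1
      _ = Real.log (2 * K) + Real.log z + Real.log ((m : ℝ) + 1) := by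
          rw [Real.log_mul (by positivity) (by positivity), Real.log_mul (by positivity) hz0.ne']
  -- combine
  have hSnn : 0 ≤ S := Finset.sum_nonneg (fun d _ => by positivity)
  have hHlb : Real.log z ≤ (harmonic n₀ : ℝ) := log_le_harmonic_floor z hz0.le
  have key : S * Real.log z ≤ 1 + Real.log (2 * K) + Real.log z := by
    have h1 : S * Real.log z ≤ S * (harmonic n₀ : ℝ) := mul_le_mul_of_nonneg_left hHlb hSnn
    linarith
  have hlog2 : (0.6931471803:ℝ) < Real.log 2 := Real.log_two_gt_d9
  have hlog2K : Real.log 2 ≤ Real.log (2 * K) := Real.log_le_log (by norm_num) (by linarith)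
  have hlogz2 : Real.log 2 ≤ Real.log z := Real.log_le_log (by norm_num) (by linarith)
  have hrw : (3:ℝ) * (Real.log (2 * K) / Real.log z + 1)
      = (3 * Real.log (2 * K) + 3 * Real.log z) / Real.log z := by
    field_simp
  rw [hrw, le_div_iff₀ hlogz]
  linarith
end
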